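/- If every anchor point (lᵢ, gᵢ) satisfies |gᵢ − (α·lᵢ + β)| ≤ δ, then the least-squares fit (α̂, β̂) computed from these n points (with at least two distinct lᵢ) yields predictions satisfying |（α̂·lᵢ + β̂） − (α·lᵢ + β)| ≤ 2δ·(1 + n·max_i (lᵢ − l̄)²/Σ_j (l_j − l̄)²)^{1/2} for each i — in particular the fitted line's residual from the true line at the data points is bounded by a constant multiple of δ. -/

import Mathlib

private lemma aux_sqrt_add_one_le (x : ℝ) (hx : 0 ≤ x) :
    Real.sqrt x + 1 ≤ 2 * Real.sqrt (1 + x) := by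
  have hsq : Real.sqrt x ^ 2 = x := Real.sq_sqrt hx
  have hsq1 : Real.sqrt (1 + x) ^ 2 = 1 + x := Real.sq_sqrt (by linarith)
  have h1 : (Real.sqrt x + 1) ^ 2 ≤ (2 * Real.sqrt (1 + x)) ^ 2 := by
    nlinarith [hsq, hsq1, sq_nonneg (Real.sqrt x - 1)]
  calc Real.sqrt x + 1 = Real.sqrt ((Real.sqrt x + 1) ^ 2) :=
        (Real.sqrt_sq (by positivity)).symm
    _ ≤ Real.sqrt ((2 * Real.sqrt (1 + x)) ^ 2) := Real.sqrt_le_sqrt h1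
    _ = 2 * Real.sqrt (1 + x) := Real.sqrt_sq (by positivity)

/-- If every anchor point is within `δ` of the true line `g = α·l + β`, then the
least-squares fitted line is within
`2δ·√(1 + n·max_i (l_i − l̄)² / Σ_j (l_j − l̄)²)` of the true line at each data point. -/
theorem least_squares_bounded_noise_prediction_error
    (n : ℕ) (hn : 0 < n) (l g : Fin n → ℝ) (α β δ : ℝ) (hδ : 0 < δ)
    (hnoise : ∀ i, |g i - (α * l i + β)| ≤ δ)
    (hdistinct : ∃ i j, l i ≠ l j)
    (lbar gbar αhat βhat : ℝ)
    (hlbar : lbar = (∑ i, l i) / n)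
    (hgbar : gbar = (∑ i, g i) / n)
    (hαhat : αhat = (∑ i, (l i - lbar) * (g i - gbar)) / (∑ i, (l i - lbar) ^ 2))
    (hβhat : βhat = gbar - αhat * lbar) :
    ∀ i, |(αhat * l i + βhat) - (α * l i + β)| ≤
      2 * δ * Real.sqrt (1 +
        n * (Finset.univ.sup' (Finset.univ_nonempty_iff.mpr ⟨⟨0, hn⟩⟩)
              fun i => (l i - lbar) ^ 2) / (∑ j, (l j - lbar) ^ 2)) := by
  intro i
  have hnR : (0:ℝ) < n := Nat.cast_pos.mpr hn
  set e : Fin n → ℝ := fun j => g j - (α * l j + β) with he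
  set S : ℝ := ∑ j, (l j - lbar) ^ 2 with hSdef
  set M : ℝ := Finset.univ.sup' (Finset.univ_nonempty_iff.mpr ⟨⟨0, hn⟩⟩)
      (fun i => (l i - lbar) ^ 2) with hMdef
  -- S > 0
  have hSpos : 0 < S := by
    rcases hdistinct with ⟨a, b, hab⟩
    rcases (Finset.sum_nonneg (fun j _ => sq_nonneg (l j - lbar))).lt_or_eq with h | h
    · exact h
    · exfalso
      have hz : ∀ j ∈ Finset.univ, (l j - lbar) ^ 2 = 0 :=
        (Finset.sum_eq_zero_iff_of_nonneg (fun j _ => sq_nonneg _)).mp h.symm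
      have ha := hz a (Finset.mem_univ a)
      have hb := hz b (Finset.mem_univ b)
      have : l a = lbar := by nlinarith
      have : l b = lbar := by nlinarith
      apply hab; nlinarith [hz a (Finset.mem_univ a), hz b (Finset.mem_univ b)]
  -- sum of deviations is 0
  have hsum0 : ∑ j, (l j - lbar) = 0 := by
    rw [Finset.sum_sub_distrib, Finset.sum_const, Finset.card_univ, Fintype.card_fin, hlbar]
    rw [nsmul_eq_mul]
    field_simp
    ring
  set ebar : ℝ := (∑ j, e j) / n with hebar
  have hgbar' : gbar = α * lbar + β + ebar := by
    rw [hgbar, hebar, hlbar]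
    have : ∑ j, g j = ∑ j, (α * l j + β + e j) := by
      apply Finset.sum_congr rfl; intro j _; simp only [he]; ring
    rw [this, Finset.sum_add_distrib, Finset.sum_add_distrib, Finset.sum_const,
      Finset.card_univ, Fintype.card_fin, ← Finset.mul_sum]
    field_simp
    ring
  set T : ℝ := ∑ j, (l j - lbar) * e j with hT
  have hαhat' : αhat = α + T / S := by
    rw [hαhat]
    have hnum : ∑ j, (l j - lbar) * (g j - gbar) = α * S + T := by
      have : ∀ j, (l j - lbar) * (g j - gbar)
          = α * (l j - lbar) ^ 2 + (l j - lbar) * e j - ebar * (l j - lbar) := by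
        intro j; rw [hgbar']; simp [he]; ring
      rw [Finset.sum_congr rfl (fun j _ => this j)]
      rw [Finset.sum_sub_distrib, Finset.sum_add_distrib, ← Finset.mul_sum, ← Finset.mul_sum,
        hsum0]
      simp [hT, hSdef]
    rw [hnum]
    field_simp
  -- prediction error formula
  have herr : (αhat * l i + βhat) - (α * l i + β) = (T / S) * (l i - lbar) + ebar := by
    rw [hβhat, hgbar', hαhat']; ring
  -- bounds
  have hebarle : |ebar| ≤ δ := by
    rw [hebar, abs_div, abs_of_pos hnR, div_le_iff₀ hnR]
    calc |∑ j, e j| ≤ ∑ j, |e j| := Finset.abs_sum_le_sum_abs _ _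
      _ ≤ ∑ _j : Fin n, δ := Finset.sum_le_sum (fun j _ => hnoise j)
      _ = δ * n := by simp [mul_comm]
  have hTle : |T| ≤ δ * (Real.sqrt n * Real.sqrt S) := by
    have h1 : |T| ≤ ∑ j, |l j - lbar| * δ := by
      calc |T| ≤ ∑ j, |(l j - lbar) * e j| := Finset.abs_sum_le_sum_abs _ _
        _ ≤ ∑ j, |l j - lbar| * δ := by
            apply Finset.sum_le_sum; intro j _
            rw [abs_mul]
            exact mul_le_mul_of_nonneg_left (hnoise j) (abs_nonneg _)
    have h2 : (∑ j, |l j - lbar|) ^ 2 ≤ (n : ℝ) * S := by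
      have := Finset.sum_mul_sq_le_sq_mul_sq Finset.univ (fun _ => (1:ℝ))
        (fun j => |l j - lbar|)
      simpa [sq_abs, hSdef, Finset.card_univ] using this
    have h3 : ∑ j, |l j - lbar| ≤ Real.sqrt n * Real.sqrt S := by
      rw [← Real.sqrt_mul hnR.le]
      have h4 : 0 ≤ ∑ j, |l j - lbar| := Finset.sum_nonneg fun j _ => abs_nonneg _
      exact (Real.le_sqrt h4 (by positivity)).mpr h2
    calc |T| ≤ ∑ j, |l j - lbar| * δ := h1
      _ = δ * ∑ j, |l j - lbar| := by rw [← Finset.sum_mul]; ring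
      _ ≤ δ * (Real.sqrt n * Real.sqrt S) := mul_le_mul_of_nonneg_left h3 hδ.le
  have hMi : (l i - lbar) ^ 2 ≤ M :=
    hMdef ▸ Finset.le_sup' (fun j => (l j - lbar) ^ 2) (Finset.mem_univ i)
  have hM0 : 0 ≤ M := (sq_nonneg _).trans hMi
  have hli : |l i - lbar| ≤ Real.sqrt M := by
    rw [← Real.sqrt_sq_eq_abs]
    exact Real.sqrt_le_sqrt hMi
  set x : ℝ := (n : ℝ) * M / S with hx
  have hx0 : 0 ≤ x := by positivity
  clear_value e S M ebar T x
  have hmain : |(T / S) * (l i - lbar)| ≤ δ * Real.sqrt x := by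
    rw [abs_mul, abs_div, abs_of_pos hSpos]
    have h5 : |T| / S * |l i - lbar| ≤ (δ * (Real.sqrt n * Real.sqrt S)) / S * Real.sqrt M := by
      apply mul_le_mul (by gcongr) hli (abs_nonneg _)
      positivity
    refine h5.trans (le_of_eq ?_)
    have hss : Real.sqrt S * Real.sqrt S = S := Real.mul_self_sqrt hSpos.le
    have hxval : Real.sqrt x = Real.sqrt n * Real.sqrt M / Real.sqrt S := by
      rw [hx, Real.sqrt_div (by positivity), Real.sqrt_mul hnR.le]
    have hsqSpos : 0 < Real.sqrt S := Real.sqrt_pos.mpr hSpos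
    have key : Real.sqrt S / S = 1 / Real.sqrt S := by
      rw [div_eq_div_iff hSpos.ne' hsqSpos.ne', one_mul, hss]
    calc δ * (Real.sqrt n * Real.sqrt S) / S * Real.sqrt M
        = δ * Real.sqrt n * Real.sqrt M * (Real.sqrt S / S) := by ring
      _ = δ * Real.sqrt n * Real.sqrt M * (1 / Real.sqrt S) := by rw [key]
      _ = δ * (Real.sqrt n * Real.sqrt M / Real.sqrt S) := by ring
      _ = δ * Real.sqrt x := by rw [hxval]
  have hab := aux_sqrt_add_one_le x hx0
  have hfinal : δ * Real.sqrt x + δ ≤ 2 * δ * Real.sqrt (1 + x) := by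
    have h2 := mul_le_mul_of_nonneg_left hab hδ.le
    linarith [h2]
  calc |(αhat * l i + βhat) - (α * l i + β)|
      = |(T / S) * (l i - lbar) + ebar| := by rw [herr]
    _ ≤ |(T / S) * (l i - lbar)| + |ebar| := abs_add_le _ _
    _ ≤ δ * Real.sqrt x + δ := add_le_add hmain hebarle
    _ ≤ 2 * δ * Real.sqrt (1 + x) := hfinal
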